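/- arXiv:2403.19712 — 7 statements merged into one kernel-verified Lean document; each statement's English description precedes it below -/
import Mathlib

section
/- Suppose r, s, t are complex numbers with |r| ≤ e, |s| = m·e^{cos θ} for some θ ∈ [0,2π] and m ≥ 1, s ≠ 0, and Re(1 + t/s) ≥ m(1 + cos θ). If γ₁, γ₂ > 0 satisfy γ₁ − γ₂ − e(e+1) ≥ e·sinh 1, then |r + γ₁ s + γ₂ t − 1| ≥ sinh 1. -/
open Real Complex

theorem stmt_5 (r s t : ℂ) (θ m : ℝ) (hθ : θ ∈ Set.Icc (0:ℝ) (2*π)) (hm : 1 ≤ m)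
    (hr : ‖r‖ ≤ Real.exp 1)
    (hs : ‖s‖ = m * Real.exp (Real.cos θ)) (hs0 : s ≠ 0)
    (ht : (1 + t / s).re ≥ m * (1 + Real.cos θ))
    (γ₁ γ₂ : ℝ) (hγ₁ : 0 < γ₁) (hγ₂ : 0 < γ₂)
    (h : γ₁ - γ₂ - Real.exp 1 * (Real.exp 1 + 1) ≥ Real.exp 1 * Real.sinh 1) :
    ‖r + γ₁ * s + γ₂ * t - 1‖ ≥ Real.sinh 1 := by
  have he : (0:ℝ) < Real.exp 1 := Real.exp_pos 1
  have hcos : -1 ≤ Real.cos θ := Real.neg_one_le_cos θ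
  have hsl : Real.exp (-1) ≤ ‖s‖ := by
    rw [hs]
    calc Real.exp (-1) = 1 * Real.exp (-1) := by ring
    _ ≤ m * Real.exp (Real.cos θ) :=
        mul_le_mul hm (Real.exp_le_exp.2 hcos) (le_of_lt (Real.exp_pos _)) (by linarith)
  have hts : (t/s).re ≥ -1 := by
    have h1 : (1 + t/s).re = 1 + (t/s).re := by simp
    have h2 : 0 ≤ m * (1 + Real.cos θ) := mul_nonneg (by linarith) (by linarith)
    linarith [ht]
  set z : ℂ := (γ₁:ℂ) + γ₂ * (t/s) with hz
  have hzre : z.re = γ₁ + γ₂ * (t/s).re := by simp [hz]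
  have hzre' : γ₁ - γ₂ ≤ z.re := by
    rw [hzre]; nlinarith [hts, hγ₂.le]
  have hd : γ₁ - γ₂ ≥ Real.exp 1 * (Real.sinh 1 + Real.exp 1 + 1) := by nlinarith
  have habsz : γ₁ - γ₂ ≤ ‖z‖ := le_trans hzre' (Complex.re_le_norm z)
  have hfac : (γ₁:ℂ) * s + γ₂ * t = z * s := by
    rw [hz]; field_simp
  have hkey : Real.sinh 1 + Real.exp 1 + 1 ≤ ‖(γ₁:ℂ) * s + γ₂ * t‖ := by
    rw [hfac, norm_mul]
    have h1 : Real.exp 1 * (Real.sinh 1 + Real.exp 1 + 1) * Real.exp (-1) ≤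
        ‖z‖ * ‖s‖ :=
      mul_le_mul (le_trans hd habsz) hsl (Real.exp_pos _).le (norm_nonneg z)
    have : Real.exp 1 * Real.exp (-1) = 1 := by
      rw [← Real.exp_add]; norm_num
    nlinarith [Real.sinh_pos_iff.2 (by norm_num : (0:ℝ) < 1)]
  have htri : ‖(γ₁:ℂ) * s + γ₂ * t‖ - ‖1 - r‖ ≤
      ‖r + γ₁ * s + γ₂ * t - 1‖ := by
    have h0 : r + γ₁ * s + γ₂ * t - 1 = ((γ₁:ℂ) * s + γ₂ * t) - (1 - r) := by ring
    rw [h0]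
    simpa using
      norm_sub_norm_le ((γ₁:ℂ) * s + γ₂ * t) (1 - r)
  have hr1 : ‖1 - r‖ ≤ 1 + Real.exp 1 := by
    calc ‖1 - r‖ ≤ ‖(1:ℂ)‖ + ‖r‖ := by
          simpa using norm_sub_le (1:ℂ) r
    _ ≤ 1 + Real.exp 1 := by simp; linarith
  linarith
end

section
/- Suppose r, s, t are complex numbers with |r| ≤ e, |s| = m·e^{cos θ} for some θ ∈ [0,2π] and m ≥ 1, s ≠ 0, and Re(1 + t/s) ≥ m(1 + cos θ). If γ₁, γ₂ > 0 satisfy γ₁ − γ₂ − e(e+1) ≥ e², then |r + γ₁ s + γ₂ t − 1| ≥ e. -/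
open Real Complex

theorem stmt_6 (r s t : ℂ) (θ m : ℝ) (hθ : θ ∈ Set.Icc (0:ℝ) (2*π)) (hm : 1 ≤ m)
    (hr : ‖r‖ ≤ Real.exp 1)
    (hs : ‖s‖ = m * Real.exp (Real.cos θ)) (hs0 : s ≠ 0)
    (ht : (1 + t / s).re ≥ m * (1 + Real.cos θ))
    (γ₁ γ₂ : ℝ) (hγ₁ : 0 < γ₁) (hγ₂ : 0 < γ₂)
    (h : γ₁ - γ₂ - Real.exp 1 * (Real.exp 1 + 1) ≥ Real.exp 1 ^ 2) :
    ‖r + γ₁ * s + γ₂ * t - 1‖ ≥ Real.exp 1 := by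
  have he1 : (1:ℝ) < Real.exp 1 := by
    have := Real.exp_one_gt_d9; linarith
  have hx1 : -1 ≤ Real.cos θ := Real.neg_one_le_cos θ
  have hexp : Real.exp (-1) ≤ Real.exp (Real.cos θ) := Real.exp_le_exp.2 hx1
  have hinv : Real.exp (-1) * Real.exp 1 = 1 := by
    rw [← Real.exp_add]; norm_num
  have hepos : (0:ℝ) < Real.exp (-1) := Real.exp_pos _
  -- Re(t/s) lower bound
  have hre0 : (1 + t/s).re = 1 + (t/s).re := by simp
  have hre : (t/s).re ≥ m * (1 + Real.cos θ) - 1 := by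
    rw [hre0] at ht; linarith
  -- factorization
  have hfac : (γ₁:ℂ) * s + γ₂ * t = s * (γ₁ + γ₂ * (t/s)) := by
    field_simp
  have habs : ‖(γ₁:ℂ) * s + γ₂ * t‖
      = ‖s‖ * ‖(γ₁:ℂ) + γ₂ * (t/s)‖ := by
    rw [hfac, norm_mul]
  have hre2 : ((γ₁:ℂ) + γ₂ * (t/s)).re = γ₁ + γ₂ * (t/s).re := by simp
  have hge : ((γ₁:ℂ) + γ₂*(t/s)).re ≤ ‖(γ₁:ℂ) + γ₂*(t/s)‖ :=
    Complex.re_le_norm _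
  have hApos : Real.exp 1 * (2 * Real.exp 1 + 1) ≤ (γ₁ - γ₂) := by
    nlinarith
  have hmx : 0 ≤ m * (1 + Real.cos θ) := by nlinarith
  have hB : (γ₁ - γ₂) ≤ γ₁ + γ₂ * (t/s).re := by nlinarith
  have hBabs : (γ₁ - γ₂) ≤ ‖(γ₁:ℂ) + γ₂*(t/s)‖ := by
    rw [hre2] at hge; linarith
  have hsabs : Real.exp (-1) ≤ ‖s‖ := by
    rw [hs]; nlinarith
  have hA0 : 0 ≤ (γ₁ - γ₂) := by nlinarith
  have key : 2 * Real.exp 1 + 1 ≤ ‖(γ₁:ℂ) * s + γ₂ * t‖ := by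
    rw [habs]
    have h1 : Real.exp (-1) * (γ₁ - γ₂) ≤ ‖s‖ * ‖(γ₁:ℂ) + γ₂*(t/s)‖ := by
      apply mul_le_mul hsabs hBabs hA0 (norm_nonneg _)
    have h2 : 2 * Real.exp 1 + 1 ≤ Real.exp (-1) * (γ₁ - γ₂) := by
      calc 2 * Real.exp 1 + 1 = Real.exp (-1) * (Real.exp 1 * (2 * Real.exp 1 + 1)) := by
            rw [← mul_assoc, hinv]; ring
        _ ≤ Real.exp (-1) * (γ₁ - γ₂) := by nlinarith
    linarith
  have htri : ‖(γ₁:ℂ) * s + γ₂ * t‖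
      ≤ ‖r + γ₁ * s + γ₂ * t - 1‖ + ‖1 - r‖ := by
    have := norm_add_le (r + γ₁ * s + γ₂ * t - 1) (1 - r)
    have heq : (r + γ₁ * s + γ₂ * t - 1) + (1 - r) = (γ₁:ℂ) * s + γ₂ * t := by ring
    rwa [heq] at this
  have h1r : ‖1 - r‖ ≤ 1 + Real.exp 1 := by
    calc ‖1 - r‖ ≤ ‖(1:ℂ)‖ + ‖r‖ := norm_sub_le 1 r
      _ ≤ 1 + Real.exp 1 := by simp; linarith
  linarith
end

section
/- Suppose r, s, t are complex numbers with |r| ≤ e, |s| = m·e^{cos θ} for some θ ∈ [0,2π] and m ≥ 1, s ≠ 0, and Re(1 + t/s) ≥ m(1 + cos θ). If γ₁, γ₂ > 0 satisfy γ₁ − γ₂ − e(e+1) ≥ √2·e, then |r + γ₁ s + γ₂ t − 1| ≥ √2. -/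
open Real Complex

theorem stmt_7 (r s t : ℂ) (θ m : ℝ) (hθ : θ ∈ Set.Icc (0:ℝ) (2*π)) (hm : 1 ≤ m)
    (hr : ‖r‖ ≤ Real.exp 1)
    (hs : ‖s‖ = m * Real.exp (Real.cos θ)) (hs0 : s ≠ 0)
    (ht : (1 + t / s).re ≥ m * (1 + Real.cos θ))
    (γ₁ γ₂ : ℝ) (hγ₁ : 0 < γ₁) (hγ₂ : 0 < γ₂)
    (h : γ₁ - γ₂ - Real.exp 1 * (Real.exp 1 + 1) ≥ Real.sqrt 2 * Real.exp 1) :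
    ‖r + γ₁ * s + γ₂ * t - 1‖ ≥ Real.sqrt 2 := by
  have he : (0:ℝ) < Real.exp 1 := Real.exp_pos 1
  have hcos : -1 ≤ Real.cos θ := Real.neg_one_le_cos θ
  have hsinv : Real.exp (-1) ≤ ‖s‖ := by
    rw [hs]
    calc Real.exp (-1) = 1 * Real.exp (-1) := (one_mul _).symm
      _ ≤ m * Real.exp (Real.cos θ) :=
        mul_le_mul hm (Real.exp_le_exp.2 hcos) (Real.exp_pos _).le (by linarith)
  have hm0 : 0 ≤ m * (1 + Real.cos θ) := mul_nonneg (by linarith) (by linarith)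
  have hts : (t / s).re ≥ m * (1 + Real.cos θ) - 1 := by
    have h1 : (1 + t / s).re = 1 + (t / s).re := by simp
    linarith [ht, h1.symm.le]
  have key : γ₁ - γ₂ ≤ ‖(γ₁ : ℂ) + γ₂ * (t / s)‖ := by
    calc γ₁ - γ₂ ≤ ((γ₁ : ℂ) + γ₂ * (t / s)).re := by
          simp only [Complex.add_re, Complex.ofReal_re, Complex.mul_re,
            Complex.ofReal_im, zero_mul, sub_zero]
          nlinarith [hts]
      _ ≤ ‖_‖ := Complex.re_le_norm _
  have habs : ‖γ₁ * s + γ₂ * t‖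
      = ‖s‖ * ‖(γ₁ : ℂ) + γ₂ * (t / s)‖ := by
    rw [← norm_mul]
    congr 1
    field_simp
  have hbig : Real.exp (-1) * (γ₁ - γ₂) ≤ ‖γ₁ * s + γ₂ * t‖ := by
    rw [habs]
    exact mul_le_mul hsinv key (by nlinarith [Real.sqrt_nonneg 2]) (norm_nonneg s)
  have hγ12 : Real.sqrt 2 * Real.exp 1 + Real.exp 1 * (Real.exp 1 + 1) ≤ γ₁ - γ₂ := by
    linarith
  have hinv : Real.exp (-1) * Real.exp 1 = 1 := by
    rw [← Real.exp_add]; norm_num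
  have hlow : Real.sqrt 2 + Real.exp 1 + 1 ≤ ‖γ₁ * s + γ₂ * t‖ := by
    have := mul_le_mul_of_nonneg_left hγ12 (Real.exp_pos (-1)).le
    nlinarith [this, hbig]
  have htri : ‖γ₁ * s + γ₂ * t‖
      ≤ ‖r + γ₁ * s + γ₂ * t - 1‖ + ‖r - 1‖ := by
    have : (γ₁ : ℂ) * s + γ₂ * t = (r + γ₁ * s + γ₂ * t - 1) - (r - 1) := by ring
    rw [this]
    simpa using norm_sub_le (r + γ₁ * s + γ₂ * t - 1) (r - 1)
  have hr1 : ‖r - 1‖ ≤ Real.exp 1 + 1 := by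
    have := norm_sub_le r (1:ℂ)
    simp only [norm_one] at *
    linarith
  linarith
end

section
/- Suppose r, s, t are complex numbers with |r| ≤ e, |s| = m·e^{cos θ} for some θ ∈ [0,2π] and m ≥ 1, s ≠ 0, and Re(1 + t/s) ≥ m(1 + cos θ). If γ₁, γ₂ > 0 satisfy 2(γ₁ − γ₂ − e(e+1)) ≥ π·e, then |r + γ₁ s + γ₂ t − 1| ≥ π/2. -/
open Real Complex

theorem stmt_8 (r s t : ℂ) (θ m : ℝ) (hθ : θ ∈ Set.Icc (0:ℝ) (2*π)) (hm : 1 ≤ m)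
    (hr : ‖r‖ ≤ Real.exp 1)
    (hs : ‖s‖ = m * Real.exp (Real.cos θ)) (hs0 : s ≠ 0)
    (ht : (1 + t / s).re ≥ m * (1 + Real.cos θ))
    (γ₁ γ₂ : ℝ) (hγ₁ : 0 < γ₁) (hγ₂ : 0 < γ₂)
    (h : 2 * (γ₁ - γ₂ - Real.exp 1 * (Real.exp 1 + 1)) ≥ π * Real.exp 1) :
    ‖r + γ₁ * s + γ₂ * t - 1‖ ≥ π / 2 := by
  have e1 : (0:ℝ) < Real.exp 1 := Real.exp_pos 1
  set u : ℂ := t / s with hu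
  have htu : t = s * u := by rw [hu]; field_simp
  have hure : u.re ≥ m * (1 + Real.cos θ) - 1 := by
    have h1 : (1 + u).re = 1 + u.re := by simp
    rw [h1] at ht
    linarith
  -- rewrite the combination
  have hcomb : γ₁ * s + γ₂ * t = s * ((γ₁:ℂ) + (γ₂:ℂ) * u) := by
    rw [htu]; ring
  have hreb : ((γ₁:ℂ) + (γ₂:ℂ) * u).re = γ₁ + γ₂ * u.re := by simp
  have hcos : -1 ≤ Real.cos θ := Real.neg_one_le_cos θ
  have habs2 : ‖(γ₁:ℂ) + (γ₂:ℂ) * u‖ ≥ γ₁ - γ₂ := by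
    have := Complex.re_le_norm ((γ₁:ℂ) + (γ₂:ℂ) * u)
    rw [hreb] at this
    have hge : u.re ≥ -1 := by nlinarith
    nlinarith [mul_le_mul_of_nonneg_left hge hγ₂.le]
  have hexp : Real.exp (Real.cos θ) ≥ Real.exp (-1) := Real.exp_le_exp.2 hcos
  have hexpmul : Real.exp (-1) * Real.exp 1 = 1 := by
    rw [← Real.exp_add]; norm_num
  have hdiff : γ₁ - γ₂ ≥ 0 := by nlinarith [Real.pi_pos]
  have hbig : ‖γ₁ * s + γ₂ * t‖ ≥ π / 2 + Real.exp 1 + 1 := by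
    rw [hcomb, norm_mul, hs]
    have hex : Real.exp (-1) > 0 := Real.exp_pos _
    have hms : Real.exp (-1) ≤ m * Real.exp (Real.cos θ) := by nlinarith
    have h5 : γ₁ - γ₂ ≥ Real.exp 1 * (π/2 + Real.exp 1 + 1) := by nlinarith
    have h6 : Real.exp (-1) * (γ₁ - γ₂) ≤
        m * Real.exp (Real.cos θ) * ‖(γ₁:ℂ) + (γ₂:ℂ) * u‖ :=
      mul_le_mul hms habs2 hdiff (by nlinarith)
    nlinarith
  have htri : ‖r + γ₁ * s + γ₂ * t - 1‖ ≥
      ‖γ₁ * s + γ₂ * t‖ - ‖r‖ - 1 := by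
    have h1 : (γ₁ * s + γ₂ * t : ℂ) = (r + γ₁ * s + γ₂ * t - 1) - (r - 1) := by ring
    have h2 := norm_sub_le (r + γ₁ * s + γ₂ * t - 1) (r - 1)
    have h3 : ‖r - 1‖ ≤ ‖r‖ + 1 := by
      calc ‖r - 1‖ ≤ ‖r‖ + ‖(1:ℂ)‖ := norm_sub_le r 1
      _ = ‖r‖ + 1 := by simp
    have h4 : ‖γ₁ * s + γ₂ * t‖ ≤
        ‖r + γ₁ * s + γ₂ * t - 1‖ + (‖r‖ + 1) := by
      calc ‖γ₁ * s + γ₂ * t‖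
          = ‖(r + γ₁ * s + γ₂ * t - 1) - (r - 1)‖ := by rw [← h1]
        _ ≤ ‖r + γ₁ * s + γ₂ * t - 1‖ + ‖r - 1‖ :=
            norm_sub_le _ _
        _ ≤ ‖r + γ₁ * s + γ₂ * t - 1‖ + (‖r‖ + 1) := by linarith
    linarith
  linarith
end

section
/- Suppose r, s, t, u are complex numbers with |r| ≤ e, |s| = m·e^{cos θ} for some θ ∈ [0,2π], s ≠ 0, Re(1 + t/s) ≥ m(1 + cos θ), and Re(u/s) ≥ m² cos 2θ + 3m(k−1) cos θ, where k ≥ m ≥ 2 are reals. If γ₁, γ₂, γ₃ > 0 satisfy γ₁ − γ₂ − m²γ₃ − 3m(k−1)γ₃ − e(e+1) ≥ e·sinh 1, then |r + γ₁ s + γ₂ t + γ₃ u − 1| ≥ sinh 1. -/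
open Real Complex

theorem stmt_10 (r s t u : ℂ) (θ m k : ℝ) (hθ : θ ∈ Set.Icc (0:ℝ) (2*π))
    (hm : 2 ≤ m) (hk : m ≤ k)
    (hr : ‖r‖ ≤ Real.exp 1)
    (hs : ‖s‖ = m * Real.exp (Real.cos θ)) (hs0 : s ≠ 0)
    (ht : (1 + t / s).re ≥ m * (1 + Real.cos θ))
    (hu : (u / s).re ≥ m^2 * Real.cos (2*θ) + 3*m*(k-1) * Real.cos θ)
    (γ₁ γ₂ γ₃ : ℝ) (hγ₁ : 0 < γ₁) (hγ₂ : 0 < γ₂) (hγ₃ : 0 < γ₃)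
    (h : γ₁ - γ₂ - m^2*γ₃ - 3*m*(k-1)*γ₃ - Real.exp 1 * (Real.exp 1 + 1) ≥ Real.exp 1 * Real.sinh 1) :
    ‖r + γ₁ * s + γ₂ * t + γ₃ * u - 1‖ ≥ Real.sinh 1 := by
  have hc1 : -1 ≤ Real.cos θ := Real.neg_one_le_cos θ
  have hc2 : Real.cos θ ≤ 1 := Real.cos_le_one θ
  have hE : (0:ℝ) < Real.exp 1 := Real.exp_pos 1
  have hsinh : (0:ℝ) < Real.sinh 1 := Real.sinh_pos_iff.mpr one_pos
  set w : ℂ := (γ₁:ℂ) + γ₂ * (t / s) + γ₃ * (u / s) with hwdef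
  have hkey : r + γ₁ * s + γ₂ * t + γ₃ * u - 1 = s * w + (r - 1) := by
    rw [hwdef]
    field_simp
    ring
  have hXre : (t / s).re ≥ m * (1 + Real.cos θ) - 1 := by
    have h1 : (1 + t / s).re = 1 + (t / s).re := by simp
    rw [h1] at ht; linarith
  have hcos2 : Real.cos (2*θ) = 2 * Real.cos θ ^ 2 - 1 := Real.cos_two_mul θ
  rw [hcos2] at hu
  have hwre : w.re = γ₁ + γ₂ * (t / s).re + γ₃ * (u / s).re := by
    simp [hwdef]
  set B : ℝ := γ₁ - γ₂ - m^2*γ₃ - 3*m*(k-1)*γ₃ with hBdef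
  have hB : B ≥ Real.exp 1 * Real.sinh 1 + Real.exp 1 * (Real.exp 1 + 1) := by
    rw [hBdef]; linarith
  have hwB : w.re ≥ B := by
    rw [hwre, hBdef]
    have h2 : γ₂ * (t / s).re ≥ γ₂ * (m * (1 + Real.cos θ) - 1) :=
      mul_le_mul_of_nonneg_left hXre hγ₂.le
    have h3 : γ₃ * (u / s).re ≥ γ₃ * (m^2 * (2 * Real.cos θ ^ 2 - 1) + 3*m*(k-1) * Real.cos θ) :=
      mul_le_mul_of_nonneg_left hu hγ₃.le
    have h4 : γ₂ * (m * (1 + Real.cos θ)) ≥ 0 :=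
      mul_nonneg hγ₂.le (mul_nonneg (by linarith) (by linarith))
    have h5 : γ₃ * (m * Real.cos θ)^2 ≥ 0 := mul_nonneg hγ₃.le (sq_nonneg _)
    have h6 : γ₃ * (3*m*(k-1)*(Real.cos θ + 1)) ≥ 0 := by
      apply mul_nonneg hγ₃.le
      apply mul_nonneg (by nlinarith) (by linarith)
    linarith [h2, h3, h4, h5, h6]
  have hBpos : 0 < B := by nlinarith
  have hsge : ‖s‖ ≥ 2 * (Real.exp 1)⁻¹ := by
    rw [hs]
    have : Real.exp (-1) ≤ Real.exp (Real.cos θ) := Real.exp_le_exp.mpr hc1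
    rw [Real.exp_neg] at this
    nlinarith [Real.exp_pos (Real.cos θ)]
  have hsw : ‖s * w‖ ≥ 2 * (Real.exp 1)⁻¹ * B := by
    rw [norm_mul]
    have h7 : w.re ≤ ‖w‖ := Complex.re_le_norm w
    calc 2 * (Real.exp 1)⁻¹ * B ≤ ‖s‖ * w.re := by
          apply mul_le_mul hsge hwB hBpos.le (norm_nonneg s)
      _ ≤ ‖s‖ * ‖w‖ :=
          mul_le_mul_of_nonneg_left h7 (norm_nonneg s)
  have hswB : ‖s * w‖ ≥ 2 * Real.sinh 1 + 2 * (Real.exp 1 + 1) := by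
    have e0 : (0:ℝ) < (Real.exp 1)⁻¹ := inv_pos.mpr hE
    have heq : 2 * (Real.exp 1)⁻¹ * (Real.exp 1 * Real.sinh 1 + Real.exp 1 * (Real.exp 1 + 1)) =
        2 * Real.sinh 1 + 2 * (Real.exp 1 + 1) := by
      field_simp
    have hmono : 2 * (Real.exp 1)⁻¹ * B ≥
        2 * (Real.exp 1)⁻¹ * (Real.exp 1 * Real.sinh 1 + Real.exp 1 * (Real.exp 1 + 1)) := by
      apply mul_le_mul_of_nonneg_left hB (by positivity)
    linarith [hsw, hmono, heq.ge, heq.le]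
  have hr1 : ‖r - 1‖ ≤ Real.exp 1 + 1 := by
    calc ‖r - 1‖ ≤ ‖r‖ + ‖(1:ℂ)‖ := by
          simpa using norm_sub_le r 1
      _ ≤ Real.exp 1 + 1 := by simpa using hr
  have htri : ‖s * w + (r - 1)‖ ≥ ‖s * w‖ - ‖r - 1‖ := by
    have h9 := norm_add_le (s * w + (r - 1)) (-(r - 1))
    have e1 : s * w + (r - 1) + -(r - 1) = s * w := by ring
    have e2 : ‖-(r - 1)‖ = ‖r - 1‖ := norm_neg _
    rw [e1, e2] at h9
    linarith
  rw [hkey]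
  have := htri
  linarith
end

section
/- Suppose r, s, t, u are complex numbers with |r| ≤ e, |s| = m·e^{cos θ} for some θ ∈ [0,2π], s ≠ 0, Re(1 + t/s) ≥ m(1 + cos θ), and Re(u/s) ≥ m² cos 2θ + 3m(k−1) cos θ, where k ≥ m ≥ 2 are reals. If γ₁, γ₂, γ₃ > 0 satisfy 2(γ₁ − γ₂ − m²γ₃ − 3m(k−1)γ₃ − e(e+1)) ≥ π·e, then |r + γ₁ s + γ₂ t + γ₃ u − 1| ≥ π/2. -/
open Real Complex

set_option maxHeartbeats 1000000 in
theorem stmt_13 (r s t u : ℂ) (θ m k : ℝ) (hθ : θ ∈ Set.Icc (0:ℝ) (2*π))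
    (hm : 2 ≤ m) (hk : m ≤ k)
    (hr : ‖r‖ ≤ Real.exp 1)
    (hs : ‖s‖ = m * Real.exp (Real.cos θ)) (hs0 : s ≠ 0)
    (ht : (1 + t / s).re ≥ m * (1 + Real.cos θ))
    (hu : (u / s).re ≥ m^2 * Real.cos (2*θ) + 3*m*(k-1) * Real.cos θ)
    (γ₁ γ₂ γ₃ : ℝ) (hγ₁ : 0 < γ₁) (hγ₂ : 0 < γ₂) (hγ₃ : 0 < γ₃)
    (h : 2 * (γ₁ - γ₂ - m^2*γ₃ - 3*m*(k-1)*γ₃ - Real.exp 1 * (Real.exp 1 + 1)) ≥ π * Real.exp 1) :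
    ‖r + γ₁ * s + γ₂ * t + γ₃ * u - 1‖ ≥ π / 2 := by
  have hc1 : -1 ≤ Real.cos θ := Real.neg_one_le_cos θ
  have hc2 : -1 ≤ Real.cos (2*θ) := Real.neg_one_le_cos _
  have he : (0:ℝ) < Real.exp 1 := Real.exp_pos 1
  have hπ : (0:ℝ) < π := Real.pi_pos
  have hm0 : (0:ℝ) ≤ m := by linarith
  have hre : ((γ₁ : ℂ) + (γ₂ : ℂ) * (t/s) + (γ₃ : ℂ) * (u/s)).re
      = γ₁ + γ₂ * (t/s).re + γ₃ * (u/s).re := by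
    simp [Complex.add_re, Complex.mul_re]
  have h1 : (t/s).re ≥ m*(1+Real.cos θ) - 1 := by
    have h1' : (1 + t/s).re = 1 + (t/s).re := by simp
    rw [h1'] at ht; linarith
  have hX : γ₁ + γ₂ * (t/s).re + γ₃ * (u/s).re
      ≥ π * Real.exp 1 / 2 + Real.exp 1 * (Real.exp 1 + 1) := by
    have hA : γ₂ * (t/s).re ≥ γ₂ * (m*(1+Real.cos θ) - 1) :=
      mul_le_mul_of_nonneg_left h1 hγ₂.le
    have hB : γ₃ * (u/s).re ≥ γ₃ * (m^2 * Real.cos (2*θ) + 3*m*(k-1) * Real.cos θ) :=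
      mul_le_mul_of_nonneg_left hu hγ₃.le
    have hA' : (0:ℝ) ≤ γ₂ * (m*(1+Real.cos θ)) :=
      mul_nonneg hγ₂.le (mul_nonneg hm0 (by linarith))
    have hB0 : (0:ℝ) ≤ γ₃ * m^2 * (Real.cos (2*θ) + 1) :=
      mul_nonneg (mul_nonneg hγ₃.le (sq_nonneg m)) (by linarith)
    have hC0 : (0:ℝ) ≤ γ₃ * (3*m*(k-1)) * (Real.cos θ + 1) :=
      mul_nonneg (mul_nonneg hγ₃.le (by nlinarith)) (by linarith)
    nlinarith [hA, hB, hA', hB0, hC0, h]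
  have hX0 : (0:ℝ) ≤ γ₁ + γ₂ * (t/s).re + γ₃ * (u/s).re := by nlinarith [hX, he, hπ]
  have h2 : 2 ≤ Real.exp 1 * ‖s‖ := by
    rw [hs]
    have h01 : (1:ℝ) ≤ Real.exp (1 + Real.cos θ) := Real.one_le_exp (by linarith)
    rw [Real.exp_add] at h01
    nlinarith [Real.exp_pos 1, Real.exp_pos (Real.cos θ)]
  have key : π + 2*(Real.exp 1 + 1)
      ≤ ‖s‖ * (γ₁ + γ₂ * (t/s).re + γ₃ * (u/s).re) := by
    have step1 : 2 * (γ₁ + γ₂ * (t/s).re + γ₃ * (u/s).re)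
        ≤ (Real.exp 1 * ‖s‖) * (γ₁ + γ₂ * (t/s).re + γ₃ * (u/s).re) :=
      mul_le_mul_of_nonneg_right h2 hX0
    have step2 : Real.exp 1 * (π + 2*(Real.exp 1 + 1))
        ≤ 2 * (γ₁ + γ₂ * (t/s).re + γ₃ * (u/s).re) := by
      ring_nf
      ring_nf at hX
      linarith
    have step3 : Real.exp 1 * (π + 2*(Real.exp 1 + 1))
        ≤ Real.exp 1 * (‖s‖ * (γ₁ + γ₂ * (t/s).re + γ₃ * (u/s).re)) := by
      rw [← mul_assoc]; linarith
    exact le_of_mul_le_mul_left step3 he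
  have heq : r + γ₁ * s + γ₂ * t + γ₃ * u - 1
      = s * ((γ₁ : ℂ) + (γ₂ : ℂ) * (t/s) + (γ₃ : ℂ) * (u/s)) + (r-1) := by
    have e1 : (t/s) * s = t := div_mul_cancel₀ t hs0
    have e2 : (u/s) * s = u := div_mul_cancel₀ u hs0
    have e3 : s * ((γ₁ : ℂ) + (γ₂ : ℂ) * (t/s) + (γ₃ : ℂ) * (u/s))
        = (γ₁ : ℂ) * s + (γ₂ : ℂ) * ((t/s) * s) + (γ₃ : ℂ) * ((u/s) * s) := by ring
    rw [e3, e1, e2]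
    ring
  have t1 : ‖s * ((γ₁ : ℂ) + (γ₂ : ℂ) * (t/s) + (γ₃ : ℂ) * (u/s))‖
      ≤ ‖s * ((γ₁ : ℂ) + (γ₂ : ℂ) * (t/s) + (γ₃ : ℂ) * (u/s)) + (r-1)‖
        + ‖r-1‖ := by
    have h' := norm_add_le
      (s * ((γ₁ : ℂ) + (γ₂ : ℂ) * (t/s) + (γ₃ : ℂ) * (u/s)) + (r-1)) (-(r-1))
    rw [add_neg_cancel_right, norm_neg] at h'
    exact h'
  have t2 : ‖r-1‖ ≤ Real.exp 1 + 1 := by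
    have h'' := norm_sub_le r (1:ℂ)
    simp only [norm_one] at h''
    linarith
  have t3 : ‖s‖ * (γ₁ + γ₂ * (t/s).re + γ₃ * (u/s).re)
      ≤ ‖s * ((γ₁ : ℂ) + (γ₂ : ℂ) * (t/s) + (γ₃ : ℂ) * (u/s))‖ := by
    rw [norm_mul]
    have hwre : γ₁ + γ₂ * (t/s).re + γ₃ * (u/s).re
        ≤ ‖(γ₁ : ℂ) + (γ₂ : ℂ) * (t/s) + (γ₃ : ℂ) * (u/s)‖ :=
      hre ▸ Complex.re_le_norm _
    exact mul_le_mul_of_nonneg_left hwre (norm_nonneg s)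
  rw [heq]
  linarith
end

section
/- For every complex z with |z| < 1, one has |arcsinh z| < π/2; equivalently, the image of the open unit disk under the principal branch of w ↦ sinh⁻¹ w is contained in the open disk of radius π/2 centered at 0. Consequently the image of the unit disk under h(z) = 1 + arcsinh z is contained in {w : |w − 1| < π/2}. -/
open Complex Real

noncomputable def arcsinhC (z : ℂ) : ℂ := Complex.log (z + (1 + z^2) ^ ((1:ℂ)/2))

namespace Arcsinh

variable {u : ℂ}

lemma hAre (hu : ‖u‖ < 1) : 0 < (1 + u^2).re := by
  have h1 : |(u^2).re| ≤ ‖u^2‖ := Complex.abs_re_le_norm _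
  have h2 : ‖u^2‖ = ‖u‖^2 := by simp [norm_pow]
  have h3 : ‖u‖^2 < 1 := by
    nlinarith [norm_nonneg u]
  simp only [Complex.add_re, Complex.one_re]
  nlinarith [abs_le.1 h1]

lemma hA_slit (hu : ‖u‖ < 1) : (1 + u^2) ∈ Complex.slitPlane :=
  Or.inl (hAre hu)

lemma hA_ne (hu : ‖u‖ < 1) : (1 + u^2) ≠ 0 := by
  intro h
  have := hAre hu
  rw [h] at this; simp at this

lemma hs2 (hu : ‖u‖ < 1) :
    ((1+u^2) ^ ((1:ℂ)/2)) * ((1+u^2) ^ ((1:ℂ)/2)) = 1 + u^2 := by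
  rw [← Complex.cpow_add _ _ (hA_ne hu)]
  norm_num

lemma hsre (hu : ‖u‖ < 1) : 0 < ((1+u^2) ^ ((1:ℂ)/2)).re := by
  rw [Complex.cpow_def_of_ne_zero (hA_ne hu), Complex.exp_re]
  have harg : |Complex.arg (1+u^2)| < π/2 :=
    Complex.abs_arg_lt_pi_div_two_iff.2 (Or.inl (hAre hu))
  have him : (Complex.log (1+u^2) * ((1:ℂ)/2)).im = Complex.arg (1+u^2) / 2 := by
    simp [Complex.mul_im, Complex.log_im, Complex.log_re]
    ring
  rw [him]
  have : Real.cos (Complex.arg (1+u^2) / 2) > 0 := by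
    apply Real.cos_pos_of_mem_Ioo
    constructor <;> [skip; skip] <;> cases' abs_lt.1 harg with h1 h2 <;> linarith
  positivity

lemma hs_ne (hu : ‖u‖ < 1) : ((1+u^2) ^ ((1:ℂ)/2)) ≠ 0 := by
  intro h
  have := hsre hu
  rw [h] at this; simp at this

lemma hw_mul (hu : ‖u‖ < 1) :
    (u + (1+u^2) ^ ((1:ℂ)/2)) * ((1+u^2) ^ ((1:ℂ)/2) - u) = 1 := by
  have h := hs2 hu
  have e : (u + (1+u^2)^((1:ℂ)/2)) * ((1+u^2)^((1:ℂ)/2) - u)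
      = ((1+u^2)^((1:ℂ)/2)) * ((1+u^2)^((1:ℂ)/2)) - u^2 := by ring
  rw [e, h]; ring

lemma hw_ne (hu : ‖u‖ < 1) : (u + (1+u^2) ^ ((1:ℂ)/2)) ≠ 0 := by
  intro h
  have := hw_mul hu
  rw [h, zero_mul] at this
  simp at this

lemma hw_slit (hu : ‖u‖ < 1) :
    (u + (1+u^2) ^ ((1:ℂ)/2)) ∈ Complex.slitPlane := by
  set s := (1+u^2) ^ ((1:ℂ)/2) with hs
  by_contra h
  rw [Complex.mem_slitPlane_iff] at h
  push_neg at h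
  obtain ⟨hre, him⟩ := h
  have hwne := hw_ne hu
  have hw_real : (u + s) = ((u+s).re : ℂ) := by
    apply Complex.ext <;> simp [him]
  have hrelt : (u+s).re < 0 := by
    rcases lt_or_eq_of_le hre with h | h
    · exact h
    · exfalso; apply hwne; rw [hw_real, h]; simp
  have hinv : s - u = (u + s)⁻¹ := eq_inv_of_mul_eq_one_left (by
    have h := hw_mul hu
    linear_combination h)
  have hinvre : (s - u).re ≤ 0 := by
    rw [hinv, hw_real, ← Complex.ofReal_inv]
    simp only [Complex.ofReal_re]
    exact inv_nonpos.mpr (le_of_lt hrelt)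
  have h2s : (u+s).re + (s-u).re = 2 * s.re := by
    simp [Complex.add_re, Complex.sub_re]; ring
  have := hsre hu
  rw [← hs] at this
  linarith

lemma abs_s_ge (hu : ‖u‖ < 1) :
    Real.sqrt (1 - ‖u‖^2) ≤ ‖(1+u^2) ^ ((1:ℂ)/2)‖ := by
  have h1 : ‖(1+u^2) ^ ((1:ℂ)/2)‖^2 = ‖1+u^2‖ := by
    rw [sq, ← norm_mul, hs2 hu]
  have h2 : (1:ℝ) - ‖u‖^2 ≤ ‖1+u^2‖ := by
    have := Complex.re_le_norm (1+u^2)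
    have h3 : |(u^2).re| ≤ ‖u‖^2 := by
      have := Complex.abs_re_le_norm (u^2)
      rwa [norm_pow] at this
    simp only [Complex.add_re, Complex.one_re] at this
    nlinarith [abs_le.1 h3]
  calc Real.sqrt (1 - ‖u‖^2) ≤ Real.sqrt (‖(1+u^2) ^ ((1:ℂ)/2)‖^2) := by
        apply Real.sqrt_le_sqrt; rw [h1]; exact h2
    _ = ‖(1+u^2) ^ ((1:ℂ)/2)‖ := Real.sqrt_sq (norm_nonneg _)

lemma hasDerivAt_arcsinhC (hu : ‖u‖ < 1) :
    HasDerivAt arcsinhC (((1+u^2) ^ ((1:ℂ)/2))⁻¹) u := by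
  set s := (1+u^2) ^ ((1:ℂ)/2) with hsdef
  have hinner : HasDerivAt (fun z : ℂ => 1 + z^2) (2*u) u := by
    simpa using ((hasDerivAt_pow 2 u).const_add 1)
  have hcpow : HasDerivAt (fun z : ℂ => (1 + z^2) ^ ((1:ℂ)/2)) (u * s⁻¹) u := by
    have := hinner.cpow_const (c := (1:ℂ)/2) (hA_slit hu)
    convert this using 1
    have : ((1:ℂ)/2 - 1) = -((1:ℂ)/2) := by norm_num
    rw [this, Complex.cpow_neg, ← hsdef]
    ring
  have hwd : HasDerivAt (fun z : ℂ => z + (1 + z^2) ^ ((1:ℂ)/2)) (1 + u * s⁻¹) u :=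
    (hasDerivAt_id u).add hcpow
  have hlog : HasDerivAt Complex.log (u + s)⁻¹ (u + s) := Complex.hasDerivAt_log (hw_slit hu)
  have := hlog.comp u hwd
  refine this.congr_deriv ?_
  have hsne := hs_ne hu
  have hwne := hw_ne hu
  rw [← hsdef] at hsne hwne
  field_simp
  ring

end Arcsinh

theorem stmt_16 (z : ℂ) (hz : ‖z‖ < 1) :
    ‖arcsinhC z‖ < π / 2 ∧
    ‖(1 + arcsinhC z) - 1‖ < π / 2 := by
  have main : ‖arcsinhC z‖ < π / 2 := by
    set r := ‖z‖ with hr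
    have hr0 : 0 ≤ r := norm_nonneg z
    have habs : ∀ t : ℝ, t ∈ Set.Icc (0:ℝ) 1 → ‖(t:ℂ) * z‖ < 1 := by
      intro t ht
      rw [norm_mul, Complex.norm_real, Real.norm_eq_abs]
      calc |t| * r ≤ 1 * r := by
            apply mul_le_mul_of_nonneg_right _ hr0
            rw [abs_le]; constructor <;> [linarith [ht.1]; exact ht.2]
        _ = r := one_mul r
        _ < 1 := hz
    -- derivative along path
    set f' : ℝ → ℂ := fun t => z * (((1+((t:ℂ)*z)^2) ^ ((1:ℂ)/2))⁻¹) with hf'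
    have hderiv : ∀ t ∈ Set.uIcc (0:ℝ) 1,
        HasDerivAt (fun t : ℝ => arcsinhC ((t:ℂ)*z)) (f' t) t := by
      intro t ht
      rw [Set.uIcc_of_le zero_le_one] at ht
      have h1 : HasDerivAt (fun t : ℝ => (t:ℂ)*z) z t := by
        simpa using (Complex.ofRealCLM.hasDerivAt (x := t)).mul_const z
      have h2 := Arcsinh.hasDerivAt_arcsinhC (habs t ht)
      have := h2.scomp t h1
      exact this.congr_deriv (by simp [hf', smul_eq_mul, mul_comm])
    have hcont : ContinuousOn f' (Set.uIcc (0:ℝ) 1) := by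
      rw [Set.uIcc_of_le zero_le_one]
      intro t ht
      apply ContinuousWithinAt.mono _ (Set.subset_univ _)
      apply ContinuousAt.continuousWithinAt
      apply ContinuousAt.mul continuousAt_const
      apply ContinuousAt.inv₀
      · apply ContinuousAt.cpow
        · exact (continuousAt_const.add (((Complex.continuous_ofReal.continuousAt).mul continuousAt_const).pow 2))
        · exact continuousAt_const
        · exact Arcsinh.hA_slit (habs t ht)
      · exact Arcsinh.hs_ne (habs t ht)
    have hint : IntervalIntegrable f' MeasureTheory.volume 0 1 :=
      hcont.intervalIntegrable
    have hftc : ∫ t in (0:ℝ)..1, f' t = arcsinhC z - arcsinhC 0 := by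
      have := intervalIntegral.integral_eq_sub_of_hasDerivAt hderiv hint
      simpa using this
    have h0 : arcsinhC 0 = 0 := by
      simp [arcsinhC, Complex.one_cpow, Complex.log_one]
    rw [h0, sub_zero] at hftc
    -- bound function
    set g : ℝ → ℝ := fun t => r / Real.sqrt (1 - t^2 * r^2) with hg
    have hpos : ∀ t : ℝ, t ∈ Set.Icc (0:ℝ) 1 → 0 < 1 - t^2 * r^2 := by
      intro t ht
      have : t^2 ≤ 1 := by nlinarith [ht.1, ht.2]
      nlinarith
    have hgcont : ContinuousOn g (Set.uIcc (0:ℝ) 1) := by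
      rw [Set.uIcc_of_le zero_le_one]
      apply ContinuousOn.div continuousOn_const
      · exact (Real.continuous_sqrt.comp_continuousOn
          ((continuousOn_const.sub (((continuousOn_id.pow 2)).mul continuousOn_const))))
      · intro t ht
        exact ne_of_gt (Real.sqrt_pos.2 (hpos t ht))
    have hgint : IntervalIntegrable g MeasureTheory.volume 0 1 := hgcont.intervalIntegrable
    have hbound : ∀ t ∈ Set.uIoc (0:ℝ) 1, ‖f' t‖ ≤ g t := by
      intro t ht
      rw [Set.uIoc_of_le zero_le_one] at ht
      have htIcc : t ∈ Set.Icc (0:ℝ) 1 := ⟨le_of_lt ht.1, ht.2⟩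
      have hu := habs t htIcc
      have hge := Arcsinh.abs_s_ge hu
      have habs_tz : ‖(t:ℂ)*z‖^2 = t^2 * r^2 := by
        rw [norm_mul, Complex.norm_real, Real.norm_eq_abs, mul_pow, _root_.sq_abs]
      rw [habs_tz] at hge
      have hs_pos : 0 < ‖(1+((t:ℂ)*z)^2) ^ ((1:ℂ)/2)‖ :=
        norm_pos_iff.2 (Arcsinh.hs_ne hu)
      have hsqrt_pos : 0 < Real.sqrt (1 - t^2*r^2) := Real.sqrt_pos.2 (hpos t htIcc)
      simp only [hf', hg, norm_mul, norm_inv]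
      rw [div_eq_mul_inv]
      apply mul_le_mul_of_nonneg_left _ hr0
      exact inv_anti₀ hsqrt_pos hge
    have hle : ‖∫ t in (0:ℝ)..1, f' t‖ ≤ |∫ t in (0:ℝ)..1, g t| := by
      refine (intervalIntegral.norm_integral_le_of_norm_le zero_le_one ?_ hgint).trans (le_abs_self _)
      filter_upwards with t ht
      exact hbound t (by rwa [Set.uIoc_of_le zero_le_one])
    -- compute ∫ g = arcsin r
    have hgderiv : ∀ t ∈ Set.uIcc (0:ℝ) 1,
        HasDerivAt (fun t : ℝ => Real.arcsin (t * r)) (g t) t := by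
      intro t ht
      rw [Set.uIcc_of_le zero_le_one] at ht
      have htr : |t * r| < 1 := by
        rw [abs_mul, _root_.abs_of_nonneg hr0]
        calc |t| * r ≤ 1 * r := by
              apply mul_le_mul_of_nonneg_right _ hr0
              rw [abs_le]; constructor <;> [linarith [ht.1]; exact ht.2]
          _ < 1 := by rwa [one_mul]
      have h1 : t * r ≠ -1 := by intro h; rw [h] at htr; norm_num at htr
      have h2 : t * r ≠ 1 := by intro h; rw [h] at htr; norm_num at htr
      have := (Real.hasDerivAt_arcsin h1 h2).comp t ((hasDerivAt_id t).mul_const r)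
      refine (this.congr_deriv ?_).congr_deriv rfl
      symm
      simp only [hg]
      rw [show t^2*r^2 = (t*r)^2 by ring, one_mul, one_div, div_eq_mul_inv, mul_comm]
    have hgval : ∫ t in (0:ℝ)..1, g t = Real.arcsin r := by
      have := intervalIntegral.integral_eq_sub_of_hasDerivAt hgderiv hgint
      simpa using this
    have harcsin : Real.arcsin r < π / 2 := Real.arcsin_lt_pi_div_two.2 hz
    calc ‖arcsinhC z‖ = ‖∫ t in (0:ℝ)..1, f' t‖ := by
          rw [hftc]
      _ ≤ |∫ t in (0:ℝ)..1, g t| := hle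
      _ = Real.arcsin r := by rw [hgval]; exact abs_of_nonneg (Real.arcsin_nonneg.2 hr0)
      _ < π / 2 := harcsin
  refine ⟨main, ?_⟩
  simpa using main
end
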